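/- Let G = (V, E) be a finite directed graph with a designated source s ∈ V from which every vertex is reachable, and let T ⊆ E be a spanning arborescence rooted at s. Suppose each vertex x ∈ V ∖ {s} is assigned a real interval [a_x, b_x] with a_x < b_x, such that for every edge (u, v) ∈ T with u ≠ s we have b_u ≤ a_v. Then for every choice of pairwise distinct real numbers r_x ∈ [a_x, b_x] (x ∈ V ∖ {s}), the linear ordering of V ∖ {s} by increasing r_x is a linearization of (G, s). -/

import Mathlib

variable {V : Type*}

/-- `p` is a directed walk from `s` to `v` in the digraph with edge relation `E`:
`p` is the (nonempty) list of visited vertices, starting at `s`, ending at `v`,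
and each consecutive pair of vertices is an edge. -/
def IsWalk (E : V → V → Prop) (s v : V) (p : List V) : Prop :=
  p.Chain' E ∧ p.head? = some s ∧ p.getLast? = some v

/-- `v` is reachable from `s` by a directed walk. -/
def DiReachable (E : V → V → Prop) (s v : V) : Prop :=
  ∃ p, IsWalk E s v p

/-- Hop-distance from `s` to `v`: the minimum number of edges on a directed path
(equivalently, walk) from `s` to `v`.  A walk on `k + 1` vertices has `k` edges. -/
noncomputable def hopDist (E : V → V → Prop) (s v : V) : ℕ :=
  sInf {k | ∃ p, IsWalk E s v p ∧ p.length = k + 1}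

/-- The total weight of a walk `p` under the edge weighting `w`:
the sum of `w` over the consecutive pairs of vertices of `p`. -/
def walkWeight (w : V → V → ℝ) (p : List V) : ℝ :=
  ((p.zip p.tail).map fun e => w e.1 e.2).sum

/-- Weighted distance from `s` to `v` under the weighting `w`:
the minimum total weight of a directed path from `s` to `v`. -/
noncomputable def weightedDist (E : V → V → Prop) (w : V → V → ℝ) (s v : V) : ℝ :=
  sInf {c | ∃ p, IsWalk E s v p ∧ p.Nodup ∧ walkWeight w p = c}

/-- `L` is a linearization of `(G, s)`: `L` is a linear ordering (a duplicate-free list)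
of `V \ {s}`, and there exists a positive edge weighting `w` of `G` such that the weighted
distances from `s` of all vertices `≠ s` are pairwise distinct and `L` lists `V \ {s}`
in increasing order of weighted distance from `s`. -/
def IsLinearization (E : V → V → Prop) (s : V) (L : List V) : Prop :=
  L.Nodup ∧ (∀ v, v ∈ L ↔ v ≠ s) ∧
  ∃ w : V → V → ℝ,
    (∀ u v, E u v → 0 < w u v) ∧
    (∀ x, x ≠ s → ∀ y, y ≠ s → x ≠ y →
      weightedDist E w s x ≠ weightedDist E w s y) ∧
    L.Pairwise (fun x y => weightedDist E w s x < weightedDist E w s y)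

/-- `ℓ(G, s)`: the number of linearizations of `(G, s)`. -/
noncomputable def numLinearizations (E : V → V → Prop) (s : V) : ℕ :=
  {L : List V | IsLinearization E s L}.ncard

/-- `T` is a spanning arborescence of `(G, s)`: a subset of the edges of `G` such that
every vertex `v ≠ s` is reachable from `s` in `T` and has exactly one incoming `T`-edge,
and `s` has no incoming `T`-edge. -/
def IsArborescence (E T : V → V → Prop) (s : V) : Prop :=
  (∀ u v, T u v → E u v) ∧
  (∀ u, ¬ T u s) ∧
  (∀ v, v ≠ s → DiReachable T s v ∧ ∃! u, T u v)

/-!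
Put `t s = 0` and `t x = exp (r x)` for `x ≠ s`. Since the intervals are stacked along the
arborescence, `t` increases strictly along every `T`-edge. Weight a `T`-edge `u → v` by
`t v - t u` and any other edge by `max (t v - t u) 1`: all weights are positive, every walk from
`s` to `v` weighs at least `t v` by telescoping, and the `T`-path to `v` weighs exactly `t v`.
So the distances are `t`, which orders `V ∖ {s}` as `r` does.
-/

open Real

section Walks

variable {E : V → V → Prop} {s v : V} {p : List V}

theorem IsWalk.mono {T : V → V → Prop} (hTE : ∀ u v, T u v → E u v) (hp : IsWalk T s v p) :
    IsWalk E s v p :=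
  ⟨hp.1.imp fun {u v} => hTE u v, hp.2⟩

theorem walkWeight_cons_cons (w : V → V → ℝ) (x y : V) (l : List V) :
    walkWeight w (x :: y :: l) = w x y + walkWeight w (y :: l) := by
  simp [walkWeight]

theorem walkWeight_mono {w w' : V → V → ℝ} (h : ∀ u v, E u v → w u v ≤ w' u v)
    (hp : p.IsChain E) : walkWeight w p ≤ walkWeight w' p := by
  induction hp with
  | nil | singleton => simp [walkWeight]
  | cons_cons huv _ ih =>
    rw [walkWeight_cons_cons, walkWeight_cons_cons]
    exact add_le_add (h _ _ huv) ih

theorem walkWeight_congr {w w' : V → V → ℝ} (h : ∀ u v, E u v → w u v = w' u v)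
    (hp : p.IsChain E) : walkWeight w p = walkWeight w' p :=
  le_antisymm (walkWeight_mono (fun u v huv => (h u v huv).le) hp)
    (walkWeight_mono (fun u v huv => (h u v huv).ge) hp)

theorem walkWeight_sub_potential (t : V → ℝ) {x : V} :
    ∀ {p : List V}, p.head? = some x → p.getLast? = some v →
      walkWeight (fun u v => t v - t u) p = t v - t x
  | [], hx, _ => by simp at hx
  | [u], hx, hv => by simp_all [walkWeight]
  | u :: y :: l, hx, hv => by
    obtain rfl : u = x := by simpa using hx
    rw [walkWeight_cons_cons, walkWeight_sub_potential t rfl (by simpa using hv)]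
    ring

theorem sub_le_walkWeight_of_isWalk {w : V → V → ℝ} {t : V → ℝ}
    (hw : ∀ u v, E u v → t v - t u ≤ w u v) (hp : IsWalk E s v p) :
    t v - t s ≤ walkWeight w p :=
  walkWeight_sub_potential t hp.2.1 hp.2.2 ▸ walkWeight_mono hw hp.1

theorem List.IsChain.nodup_of_lt {t : V → ℝ} (ht : ∀ u v, E u v → t u < t v)
    (hp : p.IsChain E) : p.Nodup := by
  have hsorted : (p.map t).Pairwise (· < ·) :=
    List.isChain_iff_pairwise.mp (List.isChain_map_of_isChain t ht hp)
  exact List.Nodup.of_map t (hsorted.imp ne_of_lt)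

theorem weightedDist_eq_of_isWalk {w : V → V → ℝ} {t : V → ℝ}
    (hw : ∀ u v, E u v → t v - t u ≤ w u v) (hp : IsWalk E s v p) (hnd : p.Nodup)
    (hwp : walkWeight w p = t v - t s) : weightedDist E w s v = t v - t s :=
  IsLeast.csInf_eq ⟨⟨p, hp, hnd, hwp⟩, by
    rintro _ ⟨q, hq, -, rfl⟩
    exact sub_le_walkWeight_of_isWalk hw hq⟩

end Walks

section Potential

variable {E T : V → V → Prop} {s : V}

theorem exists_pos_weightedDist_eq_sub (hTE : ∀ u v, T u v → E u v)
    (hTreach : ∀ v, v ≠ s → DiReachable T s v) {t : V → ℝ} (ht : ∀ u v, T u v → t u < t v) :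
    ∃ w : V → V → ℝ, (∀ u v, E u v → 0 < w u v) ∧
      ∀ v, v ≠ s → weightedDist E w s v = t v - t s := by
  classical
  refine ⟨fun u v => if T u v then t v - t u else max (t v - t u) 1, ?_, fun v hv => ?_⟩
  · intro u v _
    dsimp only
    split_ifs with huv
    · exact sub_pos.mpr (ht u v huv)
    · exact lt_max_of_lt_right one_pos
  · obtain ⟨p, hp⟩ := hTreach v hv
    refine weightedDist_eq_of_isWalk (fun u v _ => ?_) (hp.mono hTE) (hp.1.nodup_of_lt ht) ?_
    · split_ifs
      exacts [le_rfl, le_max_left _ _]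
    · rw [walkWeight_congr (fun u v huv => if_pos huv) hp.1]
      exact walkWeight_sub_potential t hp.2.1 hp.2.2

theorem isLinearization_of_potential (hTE : ∀ u v, T u v → E u v)
    (hTreach : ∀ v, v ≠ s → DiReachable T s v) {t : V → ℝ} (ht : ∀ u v, T u v → t u < t v)
    (htinj : ∀ x, x ≠ s → ∀ y, y ≠ s → x ≠ y → t x ≠ t y) {L : List V} (hnd : L.Nodup)
    (hmem : ∀ v, v ∈ L ↔ v ≠ s) (hsort : L.Pairwise fun x y => t x < t y) :
    IsLinearization E s L := by
  obtain ⟨w, hwpos, hdist⟩ := exists_pos_weightedDist_eq_sub hTE hTreach ht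
  refine ⟨hnd, hmem, w, hwpos, fun x hx y hy hxy => ?_, hsort.imp_of_mem fun hx hy hlt => ?_⟩
  · rw [hdist x hx, hdist y hy, Ne, sub_left_inj]
    exact htinj x hx y hy hxy
  · rw [hdist _ ((hmem _).1 hx), hdist _ ((hmem _).1 hy)]
    exact sub_lt_sub_right hlt _

end Potential

theorem isLinearization_of_sorted_by_interval_points_general
    [DecidableEq V] (E T : V → V → Prop) (s : V)
    (hT : IsArborescence E T s)
    (a b : V → ℝ)
    (hab : ∀ x, x ≠ s → a x < b x)
    (hTint : ∀ u v, T u v → u ≠ s → b u ≤ a v)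
    (r : V → ℝ)
    (hr : ∀ x, x ≠ s → a x ≤ r x ∧ r x ≤ b x)
    (hrinj : ∀ x, x ≠ s → ∀ y, y ≠ s → x ≠ y → r x ≠ r y)
    (L : List V) (hnd : L.Nodup) (hmem : ∀ v, v ∈ L ↔ v ≠ s)
    (hsort : L.Pairwise (fun x y => r x < r y)) :
    IsLinearization E s L := by
  obtain ⟨hTE, hTs, hTv⟩ := hT
  have hr_lt : ∀ u v, T u v → u ≠ s → v ≠ s → r u < r v := by
    intro u v huv hu hv
    have hne : u ≠ v := by
      rintro rfl
      exact (hTint u u huv hu).not_gt (hab u hu)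
    exact ((hr u hu).2.trans ((hTint u v huv hu).trans (hr v hv).1)).lt_of_ne
      (hrinj u hu v hv hne)
  let t : V → ℝ := fun x => if x = s then 0 else exp (r x)
  have ht : ∀ x, x ≠ s → t x = exp (r x) := fun x hx => if_neg hx
  refine isLinearization_of_potential hTE (fun v hv => (hTv v hv).1) (t := t) (fun u v huv => ?_)
    (fun x hx y hy hxy => ?_) hnd hmem (hsort.imp_of_mem fun hx hy hlt => ?_)
  · have hv : v ≠ s := by rintro rfl; exact hTs u huv
    rw [ht v hv]
    by_cases hu : u = s
    · simpa [t, hu] using exp_pos (r v)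
    · rw [ht u hu]
      exact exp_lt_exp.mpr (hr_lt u v huv hu hv)
  · rw [ht x hx, ht y hy]
    exact exp_injective.ne (hrinj x hx y hy hxy)
  · rw [ht _ ((hmem _).1 hx), ht _ ((hmem _).1 hy)]
    exact exp_lt_exp.mpr hlt

/--
Let `G = (V, E)` be a finite directed graph with a designated source `s`
from which every vertex is reachable, and let `T ⊆ E` be a spanning arborescence rooted at
`s`.  Suppose each vertex `x ≠ s` is assigned a real interval `[a x, b x]` with `a x < b x`,
such that for every edge `(u, v) ∈ T` with `u ≠ s` we have `b u ≤ a v`.  Then for every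
choice of pairwise distinct real numbers `r x ∈ [a x, b x]` (for `x ≠ s`), the linear
ordering of `V \ {s}` by increasing `r x` is a linearization of `(G, s)`.
-/
theorem isLinearization_of_sorted_by_interval_points
    [Fintype V] [DecidableEq V] (E T : V → V → Prop) (s : V)
    (hreach : ∀ v, DiReachable E s v)
    (hT : IsArborescence E T s)
    (a b : V → ℝ)
    (hab : ∀ x, x ≠ s → a x < b x)
    (hTint : ∀ u v, T u v → u ≠ s → b u ≤ a v)
    (r : V → ℝ)
    (hr : ∀ x, x ≠ s → a x ≤ r x ∧ r x ≤ b x)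
    (hrinj : ∀ x, x ≠ s → ∀ y, y ≠ s → x ≠ y → r x ≠ r y)
    (L : List V) (hnd : L.Nodup) (hmem : ∀ v, v ∈ L ↔ v ≠ s)
    (hsort : L.Pairwise (fun x y => r x < r y)) :
    IsLinearization E s L :=
  isLinearization_of_sorted_by_interval_points_general E T s hT a b hab hTint r hr hrinj L hnd hmem
    hsort
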